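/- arXiv:1105.2969 — 2 statements merged into one kernel-verified Lean document; each statement's English description precedes it below -/
import Mathlib

section
/- Let J, R be anticommuting fundamental symmetries on H and J_α, J_β, J_γ the fundamental symmetries associated to three linearly independent unit vectors α, β, γ ∈ ℝ³. If a bounded operator A satisfies J_α A* = A J_α, J_β A* = A J_β, and J_γ A* = A J_γ, then A is self-adjoint. -/
/-!
The map `α ↦ J_α A* - A J_α` is real-linear on `ℝ³`, so vanishing on a basis it vanishes
everywhere; at the standard basis vectors this gives that `A` intertwines `A*` with each of
`J`, `R` and `JR`. Then `J A R = J R A* = A J R = J A* R`, and cancelling the involutions `J`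
and `R` gives `A = A*`.
-/

/-- The fundamental symmetry `J_α = α₁J + α₂R + α₃ iJR` associated with `α ∈ S²`. -/
noncomputable def Jvec {H : Type*} [NormedAddCommGroup H] [InnerProductSpace ℂ H]
    (J R : H →L[ℂ] H) (a1 a2 a3 : ℝ) : H →L[ℂ] H :=
  (a1 : ℂ) • J + (a2 : ℂ) • R + ((a3 : ℂ) * Complex.I) • (J * R)

theorem LinearMap.eq_zero_of_linearIndependent_of_card_eq_finrank {K V W ι : Type*}
    [DivisionRing K] [AddCommGroup V] [Module K V] [AddCommGroup W] [Module K W]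
    [Fintype ι] [FiniteDimensional K V] {v : ι → V} (hv : LinearIndependent K v)
    (hcard : Fintype.card ι = Module.finrank K V) (f : V →ₗ[K] W) (hf : ∀ i, f (v i) = 0) :
    f = 0 := by
  rw [← LinearMap.ker_eq_top, eq_top_iff, ← hv.span_eq_top_of_card_eq_finrank' hcard,
    Submodule.span_le]
  rintro _ ⟨i, rfl⟩
  exact hf i

theorem eq_of_intertwines_involutions {M : Type*} [Monoid M] {J R A B : M}
    (hJ2 : J * J = 1) (hR2 : R * R = 1) (hJ : J * B = A * J) (hR : R * B = A * R)
    (hJR : J * R * B = A * (J * R)) : A = B := by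
  have hJ_cancel : J * (A * R) = J * (B * R) :=
    calc J * (A * R) = J * R * B := by rw [← hR, mul_assoc]
      _ = A * J * R := by rw [hJR, mul_assoc]
      _ = J * (B * R) := by rw [← hJ, mul_assoc]
  have hR_cancel : A * R = B * R := by
    simpa [← mul_assoc, hJ2] using congrArg (J * ·) hJ_cancel
  simpa [mul_assoc, hR2] using congrArg (· * R) hR_cancel

section Jvec

variable {H : Type*} [NormedAddCommGroup H] [InnerProductSpace ℂ H] (J R : H →L[ℂ] H)

theorem Jvec_add (x1 x2 x3 y1 y2 y3 : ℝ) :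
    Jvec J R (x1 + y1) (x2 + y2) (x3 + y3) = Jvec J R x1 x2 x3 + Jvec J R y1 y2 y3 := by
  simp only [Jvec, Complex.ofReal_add, add_smul, add_mul]
  abel

theorem Jvec_smul (c x1 x2 x3 : ℝ) :
    Jvec J R (c * x1) (c * x2) (c * x3) = c • Jvec J R x1 x2 x3 := by
  simp only [Jvec, ← Complex.coe_smul, smul_add, smul_smul, Complex.ofReal_mul, mul_assoc]

noncomputable def jvecLinearMap : (ℝ × ℝ × ℝ) →ₗ[ℝ] (H →L[ℂ] H) where
  toFun v := Jvec J R v.1 v.2.1 v.2.2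
  map_add' _ _ := Jvec_add J R _ _ _ _ _ _
  map_smul' c _ := Jvec_smul J R c _ _ _

@[simp]
theorem jvecLinearMap_apply (v : ℝ × ℝ × ℝ) :
    jvecLinearMap J R v = Jvec J R v.1 v.2.1 v.2.2 :=
  rfl

theorem Jvec_intertwines_of_linearIndependent [CompleteSpace H] (A : H →L[ℂ] H)
    (a1 a2 a3 b1 b2 b3 c1 c2 c3 : ℝ)
    (hind : LinearIndependent ℝ ![(a1, a2, a3), (b1, b2, b3), (c1, c2, c3)])
    (h1 : Jvec J R a1 a2 a3 * star A = A * Jvec J R a1 a2 a3)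
    (h2 : Jvec J R b1 b2 b3 * star A = A * Jvec J R b1 b2 b3)
    (h3 : Jvec J R c1 c2 c3 * star A = A * Jvec J R c1 c2 c3) (x1 x2 x3 : ℝ) :
    Jvec J R x1 x2 x3 * star A = A * Jvec J R x1 x2 x3 := by
  let f := (LinearMap.mulRight ℝ (star A) - LinearMap.mulLeft ℝ A) ∘ₗ jvecLinearMap J R
  have hf : f = 0 := by
    refine LinearMap.eq_zero_of_linearIndependent_of_card_eq_finrank hind (by simp) f ?_
    intro i
    fin_cases i <;> simp [f, h1, h2, h3]
  exact sub_eq_zero.1 (LinearMap.congr_fun hf (x1, x2, x3))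

end Jvec

theorem stmt5_general {H : Type*} [NormedAddCommGroup H] [InnerProductSpace ℂ H]
    [CompleteSpace H]
    (J R : H →L[ℂ] H)
    (hJ2 : J * J = 1) (hR2 : R * R = 1)
    (a1 a2 a3 b1 b2 b3 c1 c2 c3 : ℝ)
    (hind : LinearIndependent ℝ ![(a1, a2, a3), (b1, b2, b3), (c1, c2, c3)])
    (A : H →L[ℂ] H)
    (h1 : Jvec J R a1 a2 a3 * star A = A * Jvec J R a1 a2 a3)
    (h2 : Jvec J R b1 b2 b3 * star A = A * Jvec J R b1 b2 b3)
    (h3 : Jvec J R c1 c2 c3 * star A = A * Jvec J R c1 c2 c3) :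
    IsSelfAdjoint A := by
  have hJvec := Jvec_intertwines_of_linearIndependent J R A _ _ _ _ _ _ _ _ _ hind h1 h2 h3
  have hJ : J * star A = A * J := by simpa [Jvec] using hJvec 1 0 0
  have hR : R * star A = A * R := by simpa [Jvec] using hJvec 0 1 0
  have hJR : J * R * star A = A * (J * R) := by
    have hIJR := hJvec 0 0 1
    simp only [Jvec, Complex.ofReal_zero, Complex.ofReal_one, zero_smul, zero_add, one_mul,
      smul_mul_assoc, mul_smul_comm] at hIJR
    exact smul_right_injective _ Complex.I_ne_zero hIJR
  exact (eq_of_intertwines_involutions hJ2 hR2 hJ hR hJR).symm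

/-- if a bounded operator `A` is `J_α`-, `J_β`- and `J_γ`-self-adjoint for
three linearly independent unit vectors `α, β, γ`, then `A` is self-adjoint. -/
theorem stmt5 {H : Type*} [NormedAddCommGroup H] [InnerProductSpace ℂ H]
    [CompleteSpace H]
    (J R : H →L[ℂ] H) (hJ : IsSelfAdjoint J) (hR : IsSelfAdjoint R)
    (hJ2 : J * J = 1) (hR2 : R * R = 1) (hJR : J * R = -(R * J))
    (a1 a2 a3 b1 b2 b3 c1 c2 c3 : ℝ)
    (ha : a1 ^ 2 + a2 ^ 2 + a3 ^ 2 = 1) (hb : b1 ^ 2 + b2 ^ 2 + b3 ^ 2 = 1)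
    (hc : c1 ^ 2 + c2 ^ 2 + c3 ^ 2 = 1)
    (hind : LinearIndependent ℝ ![(a1, a2, a3), (b1, b2, b3), (c1, c2, c3)])
    (A : H →L[ℂ] H)
    (h1 : Jvec J R a1 a2 a3 * star A = A * Jvec J R a1 a2 a3)
    (h2 : Jvec J R b1 b2 b3 * star A = A * Jvec J R b1 b2 b3)
    (h3 : Jvec J R c1 c2 c3 * star A = A * Jvec J R c1 c2 c3) :
    IsSelfAdjoint A :=
  stmt5_general J R hJ2 hR2 a1 a2 a3 b1 b2 b3 c1 c2 c3 hind A h1 h2 h3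
end

section
/- Let J_α, J_β be fundamental symmetries constructed from anticommuting J, R via linearly independent unit vectors α, β with α·β ≠ 0, and let J_γ = iJ_αJ_{β'} (with β' the orthogonalized vector) be the associated fundamental symmetry anticommuting with both J_α and J_β. Suppose a (possibly unbounded) densely defined operator A satisfies J_αA = A*J_α and J_βA = A*J_β (as operator equalities including domains). Then A commutes with J_γ: J_γA = AJ_γ. -/
/-- Composition `U ∘ T` of a bounded operator with a partially defined operator. -/
noncomputable def clmCompPMap {H : Type*} [NormedAddCommGroup H] [InnerProductSpace ℂ H]
    (U : H →L[ℂ] H) (T : H →ₗ.[ℂ] H) : H →ₗ.[ℂ] H :=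
  ⟨T.domain, U.toLinearMap.comp T.toFun⟩

/-- Composition `T ∘ U` of a partially defined operator with a bounded operator; its
domain is the preimage of `dom T` under `U`. -/
noncomputable def pmapCompCLM {H : Type*} [NormedAddCommGroup H] [InnerProductSpace ℂ H]
    (T : H →ₗ.[ℂ] H) (U : H →L[ℂ] H) : H →ₗ.[ℂ] H :=
  ⟨T.domain.comap U.toLinearMap,
    T.toFun.comp (U.toLinearMap.restrict fun _ hx => hx)⟩

section Composition

variable {H : Type*} [NormedAddCommGroup H] [InnerProductSpace ℂ H]
  (T S : H →ₗ.[ℂ] H) (U V : H →L[ℂ] H)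

theorem clmCompPMap_one : clmCompPMap 1 T = T := rfl

theorem pmapCompCLM_one : pmapCompCLM T 1 = T := rfl

theorem clmCompPMap_mul : clmCompPMap (U * V) T = clmCompPMap U (clmCompPMap V T) := rfl

theorem pmapCompCLM_mul : pmapCompCLM T (U * V) = pmapCompCLM (pmapCompCLM T U) V := rfl

theorem clmCompPMap_pmapCompCLM :
    clmCompPMap U (pmapCompCLM T V) = pmapCompCLM (clmCompPMap U T) V := rfl

variable {T S U V}

theorem clmCompPMap_eq_pmapCompCLM_symm (hU : U * U = 1)
    (h : clmCompPMap U T = pmapCompCLM S U) : clmCompPMap U S = pmapCompCLM T U :=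
  calc clmCompPMap U S = clmCompPMap U (pmapCompCLM S (U * U)) := by rw [hU, pmapCompCLM_one]
    _ = pmapCompCLM (clmCompPMap (U * U) T) U := by rw [pmapCompCLM_mul, ← h]; rfl
    _ = pmapCompCLM T U := by rw [hU, clmCompPMap_one]

theorem clmCompPMap_mul_eq_pmapCompCLM_mul (hU : clmCompPMap U T = pmapCompCLM S U)
    (hV : clmCompPMap V S = pmapCompCLM T V) :
    clmCompPMap (U * V) S = pmapCompCLM S (U * V) := by
  rw [clmCompPMap_mul, hV, clmCompPMap_pmapCompCLM, hU, pmapCompCLM_mul]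

theorem clmCompPMap_le_pmapCompCLM_iff :
    clmCompPMap U T ≤ pmapCompCLM T U ↔
      ∀ x : T.domain, ∃ hx : U x ∈ T.domain, U (T x) = T ⟨U x, hx⟩ :=
  ⟨fun h x => ⟨h.1 x.2, h.2 (x := x) (y := ⟨x, h.1 x.2⟩) rfl⟩,
    fun h => LinearPMap.le_of_eqLocus_ge fun x hx =>
      let ⟨hUx, hcomm⟩ := h ⟨x, hx⟩; ⟨hx, hUx, hcomm⟩⟩

theorem clmCompPMap_add_le (hU : clmCompPMap U T ≤ pmapCompCLM T U)
    (hV : clmCompPMap V T ≤ pmapCompCLM T V) :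
    clmCompPMap (U + V) T ≤ pmapCompCLM T (U + V) := by
  rw [clmCompPMap_le_pmapCompCLM_iff] at *
  intro x
  obtain ⟨hUx, hU⟩ := hU x
  obtain ⟨hVx, hV⟩ := hV x
  refine ⟨T.domain.add_mem hUx hVx, ?_⟩
  have : (⟨(U + V) x, T.domain.add_mem hUx hVx⟩ : T.domain) = ⟨U x, hUx⟩ + ⟨V x, hVx⟩ :=
    rfl
  rw [this, LinearPMap.map_add, ← hU, ← hV]
  rfl

theorem clmCompPMap_smul_le (z : ℂ) (hU : clmCompPMap U T ≤ pmapCompCLM T U) :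
    clmCompPMap (z • U) T ≤ pmapCompCLM T (z • U) := by
  rw [clmCompPMap_le_pmapCompCLM_iff] at *
  intro x
  obtain ⟨hUx, hU⟩ := hU x
  refine ⟨T.domain.smul_mem z hUx, ?_⟩
  have : (⟨(z • U) x, T.domain.smul_mem z hUx⟩ : T.domain) = z • ⟨U x, hUx⟩ := rfl
  rw [this, LinearPMap.map_smul, ← hU]
  rfl

theorem clmCompPMap_eq_pmapCompCLM_of_le (hU : clmCompPMap U T ≤ pmapCompCLM T U)
    (hUU : U * U = 1) : clmCompPMap U T = pmapCompCLM T U := by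
  refine LinearPMap.eq_of_le_of_domain_eq hU (le_antisymm hU.1 fun x hx => ?_)
  have hx' : U (U x) ∈ T.domain := hU.1 hx
  rwa [show U (U x) = x from DFunLike.congr_fun hUU x] at hx'

end Composition

section Scalars

variable {a1 a2 a3 b1 b2 b3 c : ℝ}

theorem sum_sq_add_mul_eq (ha : a1 ^ 2 + a2 ^ 2 + a3 ^ 2 = 1) (hb : b1 ^ 2 + b2 ^ 2 + b3 ^ 2 = 1)
    (hdot : a1 * b1 + a2 * b2 + a3 * b3 ≠ 0) (hc : c = -1 / (a1 * b1 + a2 * b2 + a3 * b3)) :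
    (a1 + c * b1) ^ 2 + (a2 + c * b2) ^ 2 + (a3 + c * b3) ^ 2
      = 1 / (a1 * b1 + a2 * b2 + a3 * b3) ^ 2 - 1 := by
  rw [hc]
  field_simp
  linear_combination (a1 * b1 + a2 * b2 + a3 * b3) ^ 2 * ha + hb

theorem sum_sq_add_mul_pos (hdot : a1 * b1 + a2 * b2 + a3 * b3 ≠ 0)
    (hind : ∀ t : ℝ, (b1, b2, b3) ≠ (t * a1, t * a2, t * a3))
    (hc : c = -1 / (a1 * b1 + a2 * b2 + a3 * b3)) :
    0 < (a1 + c * b1) ^ 2 + (a2 + c * b2) ^ 2 + (a3 + c * b3) ^ 2 := by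
  set d := a1 * b1 + a2 * b2 + a3 * b3
  have parallel (x y : ℝ) (h : (x + c * y) ^ 2 = 0) : y = d * x := by
    rw [hc, sq_eq_zero_iff] at h
    field_simp at h
    linarith
  refine lt_of_le_of_ne (by positivity) fun h0 => hind d ?_
  obtain ⟨h12, h3⟩ := (add_eq_zero_iff_of_nonneg (by positivity) (by positivity)).1 h0.symm
  obtain ⟨h1, h2⟩ := (add_eq_zero_iff_of_nonneg (by positivity) (by positivity)).1 h12
  rw [parallel _ _ h1, parallel _ _ h2, parallel _ _ h3]

end Scalars

section Involutions

variable {E : Type*} [Ring E] [Algebra ℂ E] {P Q : E}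

theorem mul_mul_self_eq_of_mul_add_mul_eq (hP : P * P = 1) (hQ : Q * Q = 1) {d : ℂ}
    (hPQ : P * Q + Q * P = (2 * d) • 1) : P * Q * (P * Q) = (2 * d) • (P * Q) - 1 := by
  calc P * Q * (P * Q) = P * (Q * P) * Q := by noncomm_ring
    _ = (2 * d) • (P * Q) - P * P * (Q * Q) := by
      rw [eq_sub_of_add_eq' hPQ]; noncomm_ring
    _ = (2 * d) • (P * Q) - 1 := by rw [hP, hQ, one_mul]

theorem smul_one_add_smul_mul_self {M : E} {d s t : ℂ} (hM : M * M = (2 * d) • M - 1) :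
    (s • 1 + t • M) * (s • 1 + t • M) =
      (s ^ 2 - t ^ 2) • 1 + (2 * t * (s + d * t)) • M := by
  simp only [add_mul, mul_add, smul_mul_smul, one_mul, mul_one, hM, smul_sub]
  module

theorem smul_one_add_smul_mul_self_eq_one {M : E} {c d n : ℂ} (hM : M * M = (2 * d) • M - 1)
    (hd : d ≠ 0) (hc : c = -1 / d) (hn0 : n ≠ 0) (hn : n ^ 2 = 1 / d ^ 2 - 1) :
    ((Complex.I * n⁻¹) • 1 + (Complex.I * n⁻¹ * c) • M) *
      ((Complex.I * n⁻¹) • 1 + (Complex.I * n⁻¹ * c) • M) = 1 := by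
  have hs : (Complex.I * n⁻¹) ^ 2 - (Complex.I * n⁻¹ * c) ^ 2 = 1 := by
    rw [hc]; field_simp; rw [hn]; field_simp; linear_combination (d ^ 2 - 1) * Complex.I_sq
  have ht : Complex.I * n⁻¹ + d * (Complex.I * n⁻¹ * c) = 0 := by
    rw [hc]; field_simp; ring
  rw [smul_one_add_smul_mul_self hM, hs, ht, mul_zero, zero_smul, add_zero, one_smul]

end Involutions

section FundamentalSymmetries

variable {H : Type*} [NormedAddCommGroup H] [InnerProductSpace ℂ H] {J R : H →L[ℂ] H}

theorem Jvec_mul_add_mul_swap (hJ2 : J * J = 1) (hR2 : R * R = 1) (hJR : J * R = -(R * J))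
    (u1 u2 u3 v1 v2 v3 : ℝ) :
    Jvec J R u1 u2 u3 * Jvec J R v1 v2 v3 + Jvec J R v1 v2 v3 * Jvec J R u1 u2 u3
      = (2 * ((u1 * v1 + u2 * v2 + u3 * v3 : ℝ) : ℂ)) • 1 := by
  have hRJ : R * J = -(J * R) := by rw [hJR, neg_neg]
  have hJJR : J * (J * R) = R := by rw [← mul_assoc, hJ2, one_mul]
  have hJRJ : J * R * J = -R := by rw [mul_assoc, hRJ, mul_neg, hJJR]
  have hRJR : R * (J * R) = -J := by rw [← mul_assoc, hRJ, neg_mul, mul_assoc, hR2, mul_one]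
  have hJRR : J * R * R = J := by rw [mul_assoc, hR2, mul_one]
  have hJRJR : J * R * (J * R) = -1 := by rw [mul_assoc, hRJR, mul_neg, hJ2]
  simp only [Jvec, add_mul, mul_add, smul_mul_assoc, mul_smul_comm]
  rw [hJ2, hR2, hJJR, hJRJ, hRJR, hJRR, hJRJR, hRJ]
  push_cast
  match_scalars
  · linear_combination (-2 * (u3 : ℂ) * v3) * Complex.I_sq
  all_goals ring

theorem Jvec_mul_self (hJ2 : J * J = 1) (hR2 : R * R = 1) (hJR : J * R = -(R * J))
    {u1 u2 u3 : ℝ} (hu : u1 ^ 2 + u2 ^ 2 + u3 ^ 2 = 1) :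
    Jvec J R u1 u2 u3 * Jvec J R u1 u2 u3 = 1 := by
  have h := Jvec_mul_add_mul_swap hJ2 hR2 hJR u1 u2 u3 u1 u2 u3
  rw [← two_smul ℂ, show u1 * u1 + u2 * u2 + u3 * u3 = 1 by linear_combination hu,
    Complex.ofReal_one, mul_one] at h
  exact smul_right_injective _ two_ne_zero h

theorem Jvec_add_mul_div (a1 a2 a3 b1 b2 b3 c n : ℝ) :
    Jvec J R ((a1 + c * b1) / n) ((a2 + c * b2) / n) ((a3 + c * b3) / n)
      = (n : ℂ)⁻¹ • (Jvec J R a1 a2 a3 + (c : ℂ) • Jvec J R b1 b2 b3) := by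
  simp only [Jvec]
  push_cast
  match_scalars <;> ring

end FundamentalSymmetries

theorem stmt11_general {H : Type*} [NormedAddCommGroup H] [InnerProductSpace ℂ H]
    [CompleteSpace H]
    (J R : H →L[ℂ] H)
    (hJ2 : J * J = 1) (hR2 : R * R = 1) (hJR : J * R = -(R * J))
    (a1 a2 a3 b1 b2 b3 : ℝ)
    (ha : a1 ^ 2 + a2 ^ 2 + a3 ^ 2 = 1) (hb : b1 ^ 2 + b2 ^ 2 + b3 ^ 2 = 1)
    (hdot : a1 * b1 + a2 * b2 + a3 * b3 ≠ 0)
    (hind : ∀ t : ℝ, (b1, b2, b3) ≠ (t * a1, t * a2, t * a3))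
    (c : ℝ) (hc : c = -1 / (a1 * b1 + a2 * b2 + a3 * b3))
    (n : ℝ)
    (hn : n = Real.sqrt ((a1 + c * b1) ^ 2 + (a2 + c * b2) ^ 2 + (a3 + c * b3) ^ 2))
    (Jg : H →L[ℂ] H)
    (hJg : Jg = Complex.I •
      (Jvec J R a1 a2 a3 *
        Jvec J R ((a1 + c * b1) / n) ((a2 + c * b2) / n) ((a3 + c * b3) / n)))
    (A : H →ₗ.[ℂ] H)
    (h1 : clmCompPMap (Jvec J R a1 a2 a3) A = pmapCompCLM A.adjoint (Jvec J R a1 a2 a3))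
    (h2 : clmCompPMap (Jvec J R b1 b2 b3) A = pmapCompCLM A.adjoint (Jvec J R b1 b2 b3)) :
    clmCompPMap Jg A = pmapCompCLM A Jg := by
  set Ja := Jvec J R a1 a2 a3
  set Jb := Jvec J R b1 b2 b3
  set d := a1 * b1 + a2 * b2 + a3 * b3
  have hJa : Ja * Ja = 1 := Jvec_mul_self hJ2 hR2 hJR ha
  have hJab : Ja * Jb * (Ja * Jb) = (2 * (d : ℂ)) • (Ja * Jb) - 1 :=
    mul_mul_self_eq_of_mul_add_mul_eq hJa (Jvec_mul_self hJ2 hR2 hJR hb)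
      (Jvec_mul_add_mul_swap hJ2 hR2 hJR a1 a2 a3 b1 b2 b3)
  have hpos := sum_sq_add_mul_pos hdot hind hc
  have hn0 : (n : ℂ) ≠ 0 := Complex.ofReal_ne_zero.2 (hn ▸ (Real.sqrt_pos.2 hpos).ne')
  have hn2 : (n : ℂ) ^ 2 = 1 / (d : ℂ) ^ 2 - 1 := by
    have : n ^ 2 = 1 / d ^ 2 - 1 := by
      rw [hn, Real.sq_sqrt hpos.le, sum_sq_add_mul_eq ha hb hdot hc]
    exact_mod_cast this
  have hJg' :
      Jg = (Complex.I * (n : ℂ)⁻¹) • 1 + (Complex.I * (n : ℂ)⁻¹ * c) • (Ja * Jb) := by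
    rw [hJg, Jvec_add_mul_div, mul_smul_comm, mul_add, mul_smul_comm, hJa]
    module
  have hcomm : clmCompPMap (Ja * Jb) A = pmapCompCLM A (Ja * Jb) :=
    clmCompPMap_mul_eq_pmapCompCLM_mul (clmCompPMap_eq_pmapCompCLM_symm hJa h1) h2
  rw [hJg']
  exact clmCompPMap_eq_pmapCompCLM_of_le
    (clmCompPMap_add_le (clmCompPMap_smul_le _ le_rfl) (clmCompPMap_smul_le _ hcomm.le))
    (smul_one_add_smul_mul_self_eq_one hJab (Complex.ofReal_ne_zero.2 hdot)
      (by rw [hc]; push_cast; rfl) hn0 hn2)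

/-- if a densely defined operator `A` satisfies `J_αA = A*J_α` and
`J_βA = A*J_β` (as operator equalities including domains), where `α, β` are linearly
independent unit vectors with `α ⬝ β ≠ 0` and `J_γ = iJ_αJ_{β'}` is built from the
orthogonalized vector `β' = (α + cβ)/|α + cβ|`, `c = -1/(α ⬝ β)`, then `A` commutes with
`J_γ`: `J_γA = AJ_γ`. -/
theorem stmt11 {H : Type*} [NormedAddCommGroup H] [InnerProductSpace ℂ H]
    [CompleteSpace H]
    (J R : H →L[ℂ] H) (hJ : IsSelfAdjoint J) (hR : IsSelfAdjoint R)
    (hJ2 : J * J = 1) (hR2 : R * R = 1) (hJR : J * R = -(R * J))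
    (a1 a2 a3 b1 b2 b3 : ℝ)
    (ha : a1 ^ 2 + a2 ^ 2 + a3 ^ 2 = 1) (hb : b1 ^ 2 + b2 ^ 2 + b3 ^ 2 = 1)
    (hdot : a1 * b1 + a2 * b2 + a3 * b3 ≠ 0)
    (hind : ∀ t : ℝ, (b1, b2, b3) ≠ (t * a1, t * a2, t * a3))
    (c : ℝ) (hc : c = -1 / (a1 * b1 + a2 * b2 + a3 * b3))
    (n : ℝ)
    (hn : n = Real.sqrt ((a1 + c * b1) ^ 2 + (a2 + c * b2) ^ 2 + (a3 + c * b3) ^ 2))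
    (Jg : H →L[ℂ] H)
    (hJg : Jg = Complex.I •
      (Jvec J R a1 a2 a3 *
        Jvec J R ((a1 + c * b1) / n) ((a2 + c * b2) / n) ((a3 + c * b3) / n)))
    (A : H →ₗ.[ℂ] H) (hdense : Dense (A.domain : Set H))
    (h1 : clmCompPMap (Jvec J R a1 a2 a3) A = pmapCompCLM A.adjoint (Jvec J R a1 a2 a3))
    (h2 : clmCompPMap (Jvec J R b1 b2 b3) A = pmapCompCLM A.adjoint (Jvec J R b1 b2 b3)) :
    clmCompPMap Jg A = pmapCompCLM A Jg :=
  stmt11_general J R hJ2 hR2 hJR a1 a2 a3 b1 b2 b3 ha hb hdot hind c hc n hn Jg hJg A h1 h2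
end
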